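/- arXiv:1303.5178 — 3 statements merged into one kernel-verified Lean document; each statement's English description precedes it below -/
import Mathlib

section
/- Let a, b, d1, d2 be real numbers with a^2 + b^2 = 1 and (d1, d2) ≠ (0, 0). Then the three equations (1 − 2a^2)·d2^2 = (1 − 2b^2)·d1^2, −2ab·d1^2 = (1 − 2a^2)·d1·d2, and −2ab·d2^2 = (1 − 2b^2)·d1·d2 cannot all hold simultaneously. -/
/-!
With `a² + b² = 1` we have `1 - 2b² = -(1 - 2a²)`, so the first equation says
`(1 - 2a²)(d1² + d2²) = 0` and the sum of the other two says `2ab(d1² + d2²) = 0`.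
Since `d1² + d2² ≠ 0`, both `1 - 2a²` and `2ab` vanish, which is impossible because
`(1 - 2a², 2ab) = (cos 2φ, sin 2φ)` is a unit vector.
-/

theorem one_sub_two_mul_sq_sq_add_two_mul_mul_sq {R : Type*} [CommRing R] {a b : R}
    (hab : a ^ 2 + b ^ 2 = 1) : (1 - 2 * a ^ 2) ^ 2 + (2 * a * b) ^ 2 = 1 := by
  linear_combination 4 * a ^ 2 * hab

theorem sq_add_sq_ne_zero_of_prod_ne_zero {R : Type*} [CommRing R] [LinearOrder R]
    [IsStrictOrderedRing R] {x y : R} (h : (x, y) ≠ 0) : x ^ 2 + y ^ 2 ≠ 0 := by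
  rw [sq, sq, Ne, mul_self_add_mul_self_eq_zero]
  exact fun hxy => h (Prod.ext hxy.1 hxy.2)

/-- Algebraic core of ellipticity in dimension two with three measurements:
for `a = θ1·ξ`, `b = θ2·ξ` with `a² + b² = 1` and `(d1, d2) ≠ (0, 0)`,
the three minor equations cannot all hold. -/
theorem stmt0 (a b d1 d2 : ℝ) (hab : a ^ 2 + b ^ 2 = 1) (hd : (d1, d2) ≠ (0, 0)) :
    ¬ ((1 - 2 * a ^ 2) * d2 ^ 2 = (1 - 2 * b ^ 2) * d1 ^ 2 ∧
       -(2 * a * b) * d1 ^ 2 = (1 - 2 * a ^ 2) * (d1 * d2) ∧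
       -(2 * a * b) * d2 ^ 2 = (1 - 2 * b ^ 2) * (d1 * d2)) := by
  rintro ⟨h1, h2, h3⟩
  have hs : d1 ^ 2 + d2 ^ 2 ≠ 0 := sq_add_sq_ne_zero_of_prod_ne_zero hd
  have hc : 1 - 2 * a ^ 2 = 0 := by
    refine (mul_eq_zero.1 ?_).resolve_right hs
    linear_combination h1 - 2 * d1 ^ 2 * hab
  have he : 2 * a * b = 0 := by
    refine (mul_eq_zero.1 ?_).resolve_right hs
    linear_combination -h2 - h3 + 2 * d1 * d2 * hab
  simpa [hc, he] using one_sub_two_mul_sq_sq_add_two_mul_mul_sq hab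
end

section
/- Let n ≥ 2, and identify a pair (a, b) ∈ ℝ^2 with the vector (a, b, 0, …, 0) ∈ ℝ^n. For M > 0 and t ∈ ℝ define θ1 = (cos Mt, −sin Mt), θ2 = (sin Mt, cos Mt), θ3 = (θ1 + θ2)/√2, θ4 = (cos t, −sin t), θ5 = (sin t, cos t) (all viewed in ℝ^n), and d1 = cos(Mt)/M, d2 = sin(Mt)/M, d3 = (cos Mt + sin Mt)/(√2·M), d4 = cos t, d5 = sin t. Then there exists M0 > 0 (depending only on n) such that for every M ≥ M0, every t ∈ ℝ, and every unit vector ξ ∈ ℝ^n, the equations d_j^2 · p_{θk}(ξ) = d_k^2 · p_{θj}(ξ) for all 1 ≤ j < k ≤ 5 cannot all hold. -/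
open scoped RealInnerProductSpace

/-- The vector `(a, b, 0, …, 0) ∈ ℝⁿ`. -/
noncomputable def planeVec (n : ℕ) (a b : ℝ) : EuclideanSpace ℝ (Fin n) :=
  (WithLp.equiv 2 (Fin n → ℝ)).symm
    (fun i => if (i : ℕ) = 0 then a else if (i : ℕ) = 1 then b else 0)

/-- The five directions `θ1, …, θ5` arising from the CGO-type solutions
`u1 = e^{M x1} cos(M x2)`, `u2 = e^{M x1} sin(M x2)`, `u3 = u1 + u2`, and
`u4, u5` given by the same formulas with `M` replaced by `1`, at `x2 = t`. -/
noncomputable def cgoTheta (n : ℕ) (M t : ℝ) : Fin 5 → EuclideanSpace ℝ (Fin n) := fun j =>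
  if j = 0 then planeVec n (Real.cos (M * t)) (-Real.sin (M * t))
  else if j = 1 then planeVec n (Real.sin (M * t)) (Real.cos (M * t))
  else if j = 2 then (Real.sqrt 2)⁻¹ •
      (planeVec n (Real.cos (M * t)) (-Real.sin (M * t)) +
        planeVec n (Real.sin (M * t)) (Real.cos (M * t)))
  else if j = 3 then planeVec n (Real.cos t) (-Real.sin t)
  else planeVec n (Real.sin t) (Real.cos t)

/-- The corresponding quantities `d_j = u_j/|∇u_j|`. -/
noncomputable def cgoD (M t : ℝ) : Fin 5 → ℝ := fun j =>
  if j = 0 then Real.cos (M * t) / M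
  else if j = 1 then Real.sin (M * t) / M
  else if j = 2 then (Real.cos (M * t) + Real.sin (M * t)) / (Real.sqrt 2 * M)
  else if j = 3 then Real.cos t
  else Real.sin t

/-! For `j ∈ {1,2,3}`, adding the equations with `k = 4` and `k = 5` and using
`d₄² + d₅² = 1` gives `p_{θj}(ξ) = d_j² q` with `q = p_{θ4}(ξ) + p_{θ5}(ξ)`. Since `θ1, θ2` and
`θ4, θ5` are orthonormal bases of the same plane, `p_{θ1} + p_{θ2} = q`, whereas
`d₁² + d₂² = 1/M² ≠ 1`; hence `q = 0` and `p_{θ1}, p_{θ2}, p_{θ3}` all vanish at `ξ`. For a unit `ξ`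
this says `⟨θ1,ξ⟩² = ⟨θ2,ξ⟩² = ⟨θ3,ξ⟩² = 1/2`, which is impossible for `θ3 = (θ1 + θ2)/√2`:
it forces `⟨θ1,ξ⟩⟨θ2,ξ⟩ = 0`. -/

noncomputable def quadForm {E : Type*} [NormedAddCommGroup E] [InnerProductSpace ℝ E]
    (θ ξ : E) : ℝ :=
  ‖ξ‖ ^ 2 - 2 * ⟪θ, ξ⟫ ^ 2

theorem quadForm_inv_sqrt_two_smul_add_ne_zero {E : Type*} [NormedAddCommGroup E]
    [InnerProductSpace ℝ E] {u v ξ : E} (hξ : ξ ≠ 0) (hu : quadForm u ξ = 0)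
    (hv : quadForm v ξ = 0) : quadForm ((Real.sqrt 2)⁻¹ • (u + v)) ξ ≠ 0 := by
  intro huv
  simp only [quadForm, real_inner_smul_left, inner_add_left, mul_pow, inv_pow,
    Real.sq_sqrt zero_le_two] at hu hv huv
  have hprod : ⟪u, ξ⟫ * ⟪v, ξ⟫ = 0 := by linear_combination (hu + hv) / 4 - huv / 2
  have : ‖ξ‖ ^ 2 * ‖ξ‖ ^ 2 = 0 := by
    linear_combination ‖ξ‖ ^ 2 * hu + 2 * ⟪u, ξ⟫ ^ 2 * hv + 4 * ⟪u, ξ⟫ * ⟪v, ξ⟫ * hprod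
  exact hξ (norm_eq_zero.mp (pow_eq_zero_iff two_ne_zero |>.mp (mul_self_eq_zero.mp this)))

theorem eq_sq_mul_add_of_mul_eq {d d₁ d₂ p p₁ p₂ : ℝ} (hd : d₁ ^ 2 + d₂ ^ 2 = 1)
    (h₁ : d ^ 2 * p₁ = d₁ ^ 2 * p) (h₂ : d ^ 2 * p₂ = d₂ ^ 2 * p) :
    p = d ^ 2 * (p₁ + p₂) := by
  linear_combination -h₁ - h₂ - p * hd

theorem eq_zero_of_add_eq_of_sq_add_sq_ne_one {d₁ d₂ p₁ p₂ q : ℝ}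
    (hd : d₁ ^ 2 + d₂ ^ 2 ≠ 1) (h₁ : p₁ = d₁ ^ 2 * q) (h₂ : p₂ = d₂ ^ 2 * q)
    (h : p₁ + p₂ = q) : q = 0 := by
  have : (1 - (d₁ ^ 2 + d₂ ^ 2)) * q = 0 := by linear_combination h₁ + h₂ - h
  exact (mul_eq_zero.mp this).resolve_left (sub_ne_zero.mpr hd.symm)

theorem inner_planeVec (m : ℕ) (a b : ℝ) (ξ : EuclideanSpace ℝ (Fin (m + 2))) :
    ⟪planeVec (m + 2) a b, ξ⟫ = a * ξ 0 + b * ξ 1 := by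
  simp [planeVec, PiLp.inner_apply, Fin.sum_univ_succ, mul_comm]

theorem inner_planeVec_rotation_sq_add (m : ℕ) {c s : ℝ} (h : c ^ 2 + s ^ 2 = 1)
    (ξ : EuclideanSpace ℝ (Fin (m + 2))) :
    ⟪planeVec (m + 2) c (-s), ξ⟫ ^ 2 + ⟪planeVec (m + 2) s c, ξ⟫ ^ 2 = ξ 0 ^ 2 + ξ 1 ^ 2 := by
  rw [inner_planeVec, inner_planeVec]
  linear_combination (ξ 0 ^ 2 + ξ 1 ^ 2) * h

theorem cgoTheta_two (n : ℕ) (M t : ℝ) :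
    cgoTheta n M t 2 = (Real.sqrt 2)⁻¹ • (cgoTheta n M t 0 + cgoTheta n M t 1) := rfl

theorem quadForm_cgoTheta_zero_add_one (m : ℕ) (M t : ℝ) (ξ : EuclideanSpace ℝ (Fin (m + 2))) :
    quadForm (cgoTheta (m + 2) M t 0) ξ + quadForm (cgoTheta (m + 2) M t 1) ξ
      = quadForm (cgoTheta (m + 2) M t 3) ξ + quadForm (cgoTheta (m + 2) M t 4) ξ := by
  have hM := inner_planeVec_rotation_sq_add m (Real.cos_sq_add_sin_sq (M * t)) ξ
  have h1 := inner_planeVec_rotation_sq_add m (Real.cos_sq_add_sin_sq t) ξ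
  simp only [quadForm, cgoTheta, Fin.reduceEq, ↓reduceIte]
  linear_combination 2 * h1 - 2 * hM

theorem cgoD_three_sq_add_four_sq (M t : ℝ) : cgoD M t 3 ^ 2 + cgoD M t 4 ^ 2 = 1 :=
  Real.cos_sq_add_sin_sq t

theorem cgoD_zero_sq_add_one_sq (M t : ℝ) : cgoD M t 0 ^ 2 + cgoD M t 1 ^ 2 = 1 / M ^ 2 := by
  show (Real.cos (M * t) / M) ^ 2 + (Real.sin (M * t) / M) ^ 2 = 1 / M ^ 2
  rw [div_pow, div_pow, ← add_div, Real.cos_sq_add_sin_sq]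

/-- Algebraic content of Theorem 5.1 (ellipticity with five well-chosen solutions):
for `M` large enough (depending only on `n`), at every point and every unit frequency
`ξ`, the minor equations `d_j² p_{θk}(ξ) = d_k² p_{θj}(ξ)` for all `1 ≤ j < k ≤ 5`
cannot all hold. -/
theorem stmt3 (n : ℕ) (hn : 2 ≤ n) :
    ∃ M0 > (0 : ℝ), ∀ M ≥ M0, ∀ t : ℝ, ∀ ξ : EuclideanSpace ℝ (Fin n), ‖ξ‖ = 1 →
      ¬ (∀ j k : Fin 5, j < k →
          (cgoD M t j) ^ 2 * (‖ξ‖ ^ 2 - 2 * ⟪cgoTheta n M t k, ξ⟫ ^ 2)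
            = (cgoD M t k) ^ 2 * (‖ξ‖ ^ 2 - 2 * ⟪cgoTheta n M t j, ξ⟫ ^ 2)) := by
  obtain ⟨m, rfl⟩ := Nat.exists_eq_add_of_le' hn
  refine ⟨2, two_pos, fun M hM t ξ hξ h => ?_⟩
  set q := quadForm (cgoTheta (m + 2) M t 3) ξ + quadForm (cgoTheta (m + 2) M t 4) ξ
  have hp : ∀ j : Fin 5, j < 3 →
      quadForm (cgoTheta (m + 2) M t j) ξ = cgoD M t j ^ 2 * q := fun j hj =>
    eq_sq_mul_add_of_mul_eq (cgoD_three_sq_add_four_sq M t) (h j 3 (by omega))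
      (h j 4 (by omega))
  have hd : cgoD M t 0 ^ 2 + cgoD M t 1 ^ 2 ≠ 1 := by
    rw [cgoD_zero_sq_add_one_sq, one_div, Ne, inv_eq_one]
    nlinarith
  have hq : q = 0 := eq_zero_of_add_eq_of_sq_add_sq_ne_one hd (hp 0 (by decide))
    (hp 1 (by decide)) (quadForm_cgoTheta_zero_add_one m M t ξ)
  have hzero : ∀ j : Fin 5, j < 3 → quadForm (cgoTheta (m + 2) M t j) ξ = 0 := fun j hj => by
    rw [hp j hj, hq, mul_zero]
  have h2 := hzero 2 (by decide)
  rw [cgoTheta_two] at h2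
  exact quadForm_inv_sqrt_two_smul_add_ne_zero (norm_ne_zero_iff.mp (hξ ▸ one_ne_zero))
    (hzero 0 (by decide)) (hzero 1 (by decide)) h2
end

section
/- Let n ≥ 1, J ≥ 2, let θ1, …, θJ ∈ ℝ^n be unit vectors and d1, …, dJ ∈ ℝ. For ξ ∈ ℝ^n set p_j(ξ) = ‖ξ‖^2 − 2⟨θj, ξ⟩^2 and p_{jk}(ξ) = d_j^2 · p_k(ξ) − d_k^2 · p_j(ξ). Let M(ξ) be the J×2 real matrix whose j-th row is (p_j(ξ), −d_j^2 ‖ξ‖^2). Then M(ξ) has rank 2 for every unit vector ξ ∈ ℝ^n if and only if for every ξ ∈ ℝ^n, the conditions p_{jk}(ξ) = 0 for all 1 ≤ j < k ≤ J imply ξ = 0. -/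
open scoped RealInnerProductSpace

lemma rank_le_one_of_minors {J : ℕ} (a b : Fin J → ℝ)
    (h : ∀ j k, a j * b k - a k * b j = 0) :
    (Matrix.of fun j => ![a j, b j] : Matrix (Fin J) (Fin 2) ℝ).rank ≤ 1 := by
  by_cases ha : ∃ j0, a j0 ≠ 0
  · obtain ⟨j0, hj0⟩ := ha
    have hM : (Matrix.of fun j => ![a j, b j] : Matrix (Fin J) (Fin 2) ℝ)
        = (Matrix.of fun j (_ : Fin 1) => a j) *
          (Matrix.of fun (_ : Fin 1) => ![1, b j0 / a j0]) := by
      ext j i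
      fin_cases i <;>
        simp [Matrix.mul_apply, Fin.sum_univ_succ]
      · have := h j j0
        field_simp
        nlinarith [h j j0]
    rw [hM]
    refine le_trans (Matrix.rank_mul_le_left _ _) ?_
    simpa using Matrix.rank_le_card_width (Matrix.of fun j (_ : Fin 1) => a j)
  · push_neg at ha
    have hM : (Matrix.of fun j => ![a j, b j] : Matrix (Fin J) (Fin 2) ℝ)
        = (Matrix.of fun j (_ : Fin 1) => b j) *
          (Matrix.of fun (_ : Fin 1) => ![(0:ℝ), 1]) := by
      ext j i
      fin_cases i <;> simp [Matrix.mul_apply, Fin.sum_univ_succ, ha]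
    rw [hM]
    refine le_trans (Matrix.rank_mul_le_left _ _) ?_
    simpa using Matrix.rank_le_card_width (Matrix.of fun j (_ : Fin 1) => b j)

lemma rank_eq_two_of_minor {J : ℕ} (a b : Fin J → ℝ) (j k : Fin J)
    (h : a j * b k - a k * b j ≠ 0) :
    (Matrix.of fun j => ![a j, b j] : Matrix (Fin J) (Fin 2) ℝ).rank = 2 := by
  set M : Matrix (Fin J) (Fin 2) ℝ := Matrix.of fun j => ![a j, b j]
  have hinj : Function.Injective M.mulVecLin := by
    rw [← LinearMap.ker_eq_bot, eq_bot_iff]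
    intro x hx
    simp only [LinearMap.mem_ker, Matrix.mulVecLin_apply] at hx
    have hj := congrFun hx j
    have hk := congrFun hx k
    simp [M, Matrix.mulVec, dotProduct, Fin.sum_univ_succ] at hj hk
    have h0 : x 0 = 0 := by
      have e : (a j * b k - a k * b j) * x 0 = 0 := by linear_combination b k * hj - b j * hk
      rcases mul_eq_zero.mp e with h'|h'
      · exact absurd h' h
      · exact h'
    have h1 : x 1 = 0 := by
      have e : (a j * b k - a k * b j) * x 1 = 0 := by linear_combination a j * hk - a k * hj
      rcases mul_eq_zero.mp e with h'|h'
      · exact absurd h' h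
      · exact h'
    have : x = 0 := by
      funext i; fin_cases i <;> assumption
    simp [this]
  have := LinearMap.finrank_range_of_inj hinj
  rw [Matrix.rank, this]
  simp


/-- Ellipticity criterion: the reduced principal symbol `M(ξ)`, the `J×2` matrix with
`j`-th row `(p_j(ξ), −d_j²‖ξ‖²)` where `p_j(ξ) = ‖ξ‖² − 2⟨θ_j, ξ⟩²`, has rank `2` at
every unit `ξ` if and only if the vanishing of all `p_{jk}(ξ) = d_j² p_k(ξ) − d_k² p_j(ξ)`
forces `ξ = 0`. -/
theorem stmt4 (n J : ℕ) (hn : 1 ≤ n) (hJ : 2 ≤ J)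
    (θ : Fin J → EuclideanSpace ℝ (Fin n)) (hθ : ∀ j, ‖θ j‖ = 1) (d : Fin J → ℝ) :
    (∀ ξ : EuclideanSpace ℝ (Fin n), ‖ξ‖ = 1 →
        (Matrix.of fun (j : Fin J) =>
          ![‖ξ‖ ^ 2 - 2 * ⟪θ j, ξ⟫ ^ 2, -(d j) ^ 2 * ‖ξ‖ ^ 2]).rank = 2)
    ↔ (∀ ξ : EuclideanSpace ℝ (Fin n),
        (∀ j k : Fin J, j < k →
          (d j) ^ 2 * (‖ξ‖ ^ 2 - 2 * ⟪θ k, ξ⟫ ^ 2)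
            - (d k) ^ 2 * (‖ξ‖ ^ 2 - 2 * ⟪θ j, ξ⟫ ^ 2) = 0) → ξ = 0) := by
  constructor
  · intro hL ξ hcond
    by_contra hne
    have hnorm : ‖ξ‖ ≠ 0 := fun h => hne (norm_eq_zero.mp h)
    set ξ' : EuclideanSpace ℝ (Fin n) := ‖ξ‖⁻¹ • ξ with hξ'def
    have h2 : ‖ξ'‖ = ‖ξ‖⁻¹ * ‖ξ‖ := by
      rw [hξ'def, norm_smul]
      simp [abs_of_nonneg (inv_nonneg.mpr (norm_nonneg ξ))]
    have hξ'norm : ‖ξ'‖ = 1 := by rw [h2, inv_mul_cancel₀ hnorm]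
    have hrank := hL ξ' hξ'norm
    have h1 : ∀ m : Fin J, ⟪θ m, ξ'⟫ = ‖ξ‖⁻¹ * ⟪θ m, ξ⟫ := fun m =>
      real_inner_smul_right _ _ _
    -- all differences vanish for ξ
    have hcond' : ∀ j k : Fin J,
        (d j) ^ 2 * (‖ξ‖ ^ 2 - 2 * ⟪θ k, ξ⟫ ^ 2)
          - (d k) ^ 2 * (‖ξ‖ ^ 2 - 2 * ⟪θ j, ξ⟫ ^ 2) = 0 := by
      intro j k
      rcases lt_trichotomy j k with h | h | h
      · exact hcond j k h
      · subst h; ring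
      · linear_combination -(hcond k j h)
    have hmin : ∀ j k : Fin J,
        (fun j => ‖ξ'‖ ^ 2 - 2 * ⟪θ j, ξ'⟫ ^ 2) j * (fun j => -(d j) ^ 2 * ‖ξ'‖ ^ 2) k
          - (fun j => ‖ξ'‖ ^ 2 - 2 * ⟪θ j, ξ'⟫ ^ 2) k * (fun j => -(d j) ^ 2 * ‖ξ'‖ ^ 2) j
          = 0 := by
      intro j k
      simp only
      rw [h1, h1, h2]
      linear_combination (‖ξ‖⁻¹) ^ 4 * ‖ξ‖ ^ 2 * hcond' j k
    have hle := rank_le_one_of_minors (fun j => ‖ξ'‖ ^ 2 - 2 * ⟪θ j, ξ'⟫ ^ 2)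
      (fun j => -(d j) ^ 2 * ‖ξ'‖ ^ 2) hmin
    have hrank' : (Matrix.of fun j =>
        ![(fun j => ‖ξ'‖ ^ 2 - 2 * ⟪θ j, ξ'⟫ ^ 2) j,
          (fun j => -(d j) ^ 2 * ‖ξ'‖ ^ 2) j] : Matrix (Fin J) (Fin 2) ℝ).rank = 2 := hrank
    rw [hrank'] at hle
    norm_num at hle
  · intro hR ξ hξ
    have hne : ξ ≠ 0 := by
      intro h
      rw [h] at hξ
      simp at hξ
    have := mt (hR ξ) hne
    push_neg at this
    obtain ⟨j, k, hjk, hne2⟩ := this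
    refine rank_eq_two_of_minor (fun j => ‖ξ‖ ^ 2 - 2 * ⟪θ j, ξ⟫ ^ 2)
      (fun j => -(d j) ^ 2 * ‖ξ‖ ^ 2) j k ?_
    intro h0
    apply hne2
    rw [hξ] at h0 ⊢
    linear_combination h0
end
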